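/- Let (N,v) be a zero-normalized symmetric game with v(S) = f(|S|) and (N,E) a cycle-free graph. For every nonempty connected L ⊆ E, the Harsanyi dividend of L in the link game equals λ_L(w^v) = Σ_{T : D(L) ⊆ T ⊆ L} (−1)^{|L|−|T|} w^v(T), where D(L) is the set of cutedges of L. -/

import Mathlib

open scoped Classical

noncomputable section

variable {V : Type*} [Fintype V] [DecidableEq V]

/-- The vertex set of the connected component of `i` in the graph with edge set `L`. -/
def comp (L : Finset (Sym2 V)) (i : V) : Finset V :=
  Finset.univ.filter fun j =>
    (SimpleGraph.fromEdgeSet (↑L : Set (Sym2 V))).Reachable i j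

/-- Nodes covered by the edge set `L` (the node set `N[L]`). -/
def covered (L : Finset (Sym2 V)) : Finset V :=
  Finset.univ.filter fun i => ∃ e ∈ L, i ∈ e

/-- The collection of (vertex sets of) connected components of the edge-induced
subgraph `Γ_L = (N[L], L)`. -/
def comps (L : Finset (Sym2 V)) : Finset (Finset V) :=
  (covered L).image (comp L)

/-- The link game `w^v` associated with the game `v` and an edge set. -/
def linkGame (v : Finset V → ℝ) (L : Finset (Sym2 V)) : ℝ :=
  ∑ C ∈ comps L, v C

/-- Shapley value of player `e` in the game `w` with player set `E`. -/
def shapley {α : Type*} [DecidableEq α] (E : Finset α) (w : Finset α → ℝ) (e : α) : ℝ :=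
  ∑ L ∈ (E.erase e).powerset,
    ((L.card.factorial : ℝ) * ((E.card - L.card - 1).factorial : ℝ) / (E.card.factorial : ℝ)) *
      (w (insert e L) - w L)

/-- Harsanyi dividend of coalition `L` in the game `w`. -/
def dividend {α : Type*} [DecidableEq α] (w : Finset α → ℝ) (L : Finset α) : ℝ :=
  ∑ T ∈ L.powerset, (-1 : ℝ) ^ (L.card - T.card) * w T

/-- The position value of node `i` in the communication situation `(N, v, E)`. -/
def positionValue (v : Finset V → ℝ) (E : Finset (Sym2 V)) (i : V) : ℝ :=
  (1 / 2) * ∑ e ∈ E.filter (fun e => i ∈ e), shapley E (linkGame v) e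

def Superadditive (v : Finset V → ℝ) : Prop :=
  ∀ S T : Finset V, Disjoint S T → v S + v T ≤ v (S ∪ T)

def ConvexGame (v : Finset V → ℝ) : Prop :=
  ∀ S T : Finset V, v S + v T ≤ v (S ∪ T) + v (S ∩ T)

def ZeroNormalized (v : Finset V → ℝ) : Prop :=
  v ∅ = 0 ∧ ∀ i : V, v {i} = 0

def SymmetricGame (v : Finset V → ℝ) (f : ℕ → ℝ) : Prop :=
  ∀ S : Finset V, v S = f S.card

/-- An edge set without loops. -/
def SimpleEdges (E : Finset (Sym2 V)) : Prop := ∀ e ∈ E, ¬ e.IsDiag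

/-- The edge-induced subgraph `Γ_L = (N[L], L)` is connected. -/
def EdgeConnected (L : Finset (Sym2 V)) : Prop :=
  ∀ i ∈ covered L, ∀ j ∈ covered L,
    (SimpleGraph.fromEdgeSet (↑L : Set (Sym2 V))).Reachable i j

/-- Component of `i` in the subgraph of `Γ_L` induced on the vertex set `S`. -/
def compIn (L : Finset (Sym2 V)) (S : Finset V) (i : V) : Finset V :=
  S.filter fun j =>
    (SimpleGraph.fromEdgeSet
      (↑(L.filter fun e => ∀ x ∈ e, x ∈ S) : Set (Sym2 V))).Reachable i j

/-- Number of connected components of the subgraph of `Γ_L` induced on `S`. -/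
def numCompsIn (L : Finset (Sym2 V)) (S : Finset V) : ℕ :=
  (S.image (compIn L S)).card

/-- A cutvertex of `Γ_L`: a vertex whose removal increases the number of components. -/
def IsCutvertex (L : Finset (Sym2 V)) (i : V) : Prop :=
  i ∈ covered L ∧ numCompsIn L (covered L) < numCompsIn L ((covered L).erase i)

/-- The set of cutedges of `L`: edges both of whose endpoints are cutvertices. -/
def cutedges (L : Finset (Sym2 V)) : Finset (Sym2 V) :=
  L.filter fun e => ∀ x ∈ e, IsCutvertex L x

/-- The attachment game `v_a(S) = 2(|S| - 1)` (and `v_a(∅) = 0`). -/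
def va : Finset V → ℝ := fun S => if S = ∅ then 0 else 2 * ((S.card : ℝ) - 1)

/-- The star on `V` with hub `c`: all (non-loop) edges incident to `c`. -/
def starEdges (c : V) : Finset (Sym2 V) :=
  Finset.univ.filter fun e => ¬ e.IsDiag ∧ c ∈ e

/-- The chain (path) on `Fin n`, with edges `{i, i+1}`. -/
def chainEdges (n : ℕ) : Finset (Sym2 (Fin n)) :=
  Finset.univ.filter fun e => ∃ i j : Fin n, e = s(i, j) ∧ (j : ℕ) = (i : ℕ) + 1

/-- `F(s, r) = ∑_{k=0}^{r} (-1)^k C(r,k) f(s-k)` for `f : ℕ → ℝ`. -/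
def Ffun (f : ℕ → ℝ) (s r : ℕ) : ℝ :=
  ∑ k ∈ Finset.range (r + 1), (-1 : ℝ) ^ k * (r.choose k : ℝ) * f (s - k)

/-- `F(s, r) = ∑_{k=0}^{r} (-1)^k C(r,k) f(s-k)` for `f : ℝ → ℝ`. -/
def FfunR (f : ℝ → ℝ) (s r : ℕ) : ℝ :=
  ∑ k ∈ Finset.range (r + 1), (-1 : ℝ) ^ k * (r.choose k : ℝ) * f ((s : ℝ) - (k : ℝ))



set_option linter.unusedSectionVars false
set_option linter.unusedVariables false

open Finset SimpleGraph

lemma mem_covered {L : Finset (Sym2 V)} {i : V} : i ∈ covered L ↔ ∃ e ∈ L, i ∈ e := by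
  simp [covered]

lemma covered_mono {A B : Finset (Sym2 V)} (h : A ⊆ B) : covered A ⊆ covered B := by
  intro x hx
  rw [mem_covered] at hx ⊢
  obtain ⟨e, he, hxe⟩ := hx
  exact ⟨e, h he, hxe⟩

lemma covered_union {A B : Finset (Sym2 V)} : covered (A ∪ B) = covered A ∪ covered B := by
  ext x
  simp only [mem_covered, Finset.mem_union]
  constructor
  · rintro ⟨e, he | he, hxe⟩
    · exact Or.inl ⟨e, he, hxe⟩
    · exact Or.inr ⟨e, he, hxe⟩
  · rintro (⟨e, he, hxe⟩ | ⟨e, he, hxe⟩)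
    · exact ⟨e, Or.inl he, hxe⟩
    · exact ⟨e, Or.inr he, hxe⟩

lemma walk_restrict {A B : Finset (Sym2 V)} (hdis : Disjoint (covered A) (covered B)) :
    ∀ {i j : V}, (fromEdgeSet (↑(A ∪ B) : Set (Sym2 V))).Walk i j → i ∈ covered A →
      (fromEdgeSet (↑A : Set (Sym2 V))).Reachable i j := by
  intro i j p
  induction p with
  | nil => intro _; exact Reachable.refl _
  | @cons u x j h p ih =>
    intro hu
    rw [fromEdgeSet_adj] at h
    obtain ⟨hmem, hne⟩ := h
    rw [Finset.mem_coe, Finset.mem_union] at hmem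
    rcases hmem with hA | hB
    · have hadj : (fromEdgeSet (↑A : Set (Sym2 V))).Adj u x :=
        (fromEdgeSet_adj _).mpr ⟨Finset.mem_coe.mpr hA, hne⟩
      have hx : x ∈ covered A := mem_covered.mpr ⟨s(u, x), hA, Sym2.mem_mk_right u x⟩
      exact hadj.reachable.trans (ih hx)
    · exact absurd (mem_covered.mpr ⟨s(u, x), hB, Sym2.mem_mk_left u x⟩)
        (Finset.disjoint_left.mp hdis hu)

lemma comp_union_left {A B : Finset (Sym2 V)} (hdis : Disjoint (covered A) (covered B))
    {i : V} (hi : i ∈ covered A) : comp (A ∪ B) i = comp A i := by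
  ext j
  simp only [comp, mem_filter, mem_univ, true_and]
  constructor
  · intro h
    obtain ⟨p⟩ := h
    exact walk_restrict hdis p hi
  · intro h
    exact h.mono (fromEdgeSet_mono (by exact_mod_cast Finset.subset_union_left))

lemma mem_comp_self {A : Finset (Sym2 V)} (i : V) : i ∈ comp A i := by
  simp only [comp, mem_filter, mem_univ, true_and]
  exact Reachable.refl i

lemma comp_subset_covered {A : Finset (Sym2 V)} {i : V} (hi : i ∈ covered A) :
    comp A i ⊆ covered A := by
  intro j hj
  simp only [comp, mem_filter, mem_univ, true_and] at hj
  obtain ⟨p⟩ := hj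
  cases hp : p.reverse with
  | nil => exact hi
  | cons h q =>
    rw [fromEdgeSet_adj] at h
    exact mem_covered.mpr ⟨_, Finset.mem_coe.mp h.1, Sym2.mem_mk_left _ _⟩

lemma comps_union {A B : Finset (Sym2 V)} (hdis : Disjoint (covered A) (covered B)) :
    comps (A ∪ B) = comps A ∪ comps B := by
  unfold comps
  rw [covered_union, Finset.image_union]
  congr 1
  · exact Finset.image_congr fun i hi => comp_union_left hdis hi
  · refine Finset.image_congr fun i hi => ?_
    rw [Finset.union_comm]
    exact comp_union_left hdis.symm hi

lemma comps_disjoint {A B : Finset (Sym2 V)} (hdis : Disjoint (covered A) (covered B)) :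
    Disjoint (comps A) (comps B) := by
  rw [Finset.disjoint_left]
  rintro C hCA hCB
  obtain ⟨i, hi, rfl⟩ := Finset.mem_image.mp hCA
  obtain ⟨j, hj, hCB'⟩ := Finset.mem_image.mp hCB
  have h1 : i ∈ covered A := comp_subset_covered hi (mem_comp_self i)
  have h2 : i ∈ covered B :=
    comp_subset_covered hj (by rw [hCB']; exact mem_comp_self i)
  exact Finset.disjoint_left.mp hdis h1 h2

lemma linkGame_union (v : Finset V → ℝ) {A B : Finset (Sym2 V)}
    (hdis : Disjoint (covered A) (covered B)) :
    linkGame v (A ∪ B) = linkGame v A + linkGame v B := by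
  unfold linkGame
  rw [comps_union hdis, Finset.sum_union (comps_disjoint hdis)]

lemma edge_disjoint_of_covered_disjoint {A B : Finset (Sym2 V)}
    (hdis : Disjoint (covered A) (covered B)) : Disjoint A B := by
  rw [Finset.disjoint_left]
  intro e heA heB
  obtain ⟨x, y⟩ := e
  have h1 : x ∈ covered A := mem_covered.mpr ⟨s(x, y), heA, Sym2.mem_mk_left x y⟩
  have h2 : x ∈ covered B := mem_covered.mpr ⟨s(x, y), heB, Sym2.mem_mk_left x y⟩
  exact Finset.disjoint_left.mp hdis h1 h2

omit [Fintype V] [DecidableEq V] in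
lemma neg_one_powerset_sum (M : Finset (Sym2 V)) (hM : M.Nonempty) :
    ∑ A ∈ M.powerset, (-1 : ℝ) ^ A.card = 0 := by
  exact_mod_cast Finset.sum_powerset_neg_one_pow_card_of_nonempty hM

lemma alt_sum_zero (v : Finset V → ℝ) {M₁ M₂ : Finset (Sym2 V)}
    (h1 : M₁.Nonempty) (h2 : M₂.Nonempty)
    (hdis : Disjoint (covered M₁) (covered M₂)) :
    ∑ T ∈ (M₁ ∪ M₂).powerset, (-1 : ℝ) ^ T.card * linkGame v T = 0 := by
  have hM : Disjoint M₁ M₂ := edge_disjoint_of_covered_disjoint hdis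
  have key : ∑ T ∈ (M₁ ∪ M₂).powerset, (-1 : ℝ) ^ T.card * linkGame v T =
      ∑ p ∈ M₁.powerset ×ˢ M₂.powerset, (-1 : ℝ) ^ (p.1 ∪ p.2).card * linkGame v (p.1 ∪ p.2) := by
    refine Finset.sum_nbij' (fun T => (T ∩ M₁, T ∩ M₂)) (fun p => p.1 ∪ p.2) ?_ ?_ ?_ ?_ ?_
    · intro T hT
      simp only [Finset.mem_product, Finset.mem_powerset]
      exact ⟨Finset.inter_subset_right, Finset.inter_subset_right⟩
    · intro p hp
      simp only [Finset.mem_product, Finset.mem_powerset] at hp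
      exact Finset.mem_powerset.mpr (Finset.union_subset_union hp.1 hp.2)
    · intro T hT
      rw [Finset.mem_powerset] at hT
      show T ∩ M₁ ∪ T ∩ M₂ = T
      rw [← Finset.inter_union_distrib_left, Finset.inter_eq_left.mpr hT]
    · intro p hp
      simp only [Finset.mem_product, Finset.mem_powerset] at hp
      have e1 : (p.1 ∪ p.2) ∩ M₁ = p.1 := by
        rw [Finset.union_inter_distrib_right, Finset.inter_eq_left.mpr hp.1,
          Finset.disjoint_iff_inter_eq_empty.mp (hM.symm.mono_left hp.2), Finset.union_empty]
      have e2 : (p.1 ∪ p.2) ∩ M₂ = p.2 := by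
        rw [Finset.union_inter_distrib_right, Finset.inter_eq_left.mpr hp.2,
          Finset.disjoint_iff_inter_eq_empty.mp (hM.mono_left hp.1), Finset.empty_union]
      show ((p.1 ∪ p.2) ∩ M₁, (p.1 ∪ p.2) ∩ M₂) = p
      rw [e1, e2]
    · intro T hT
      rw [Finset.mem_powerset] at hT
      have hTT : T ∩ M₁ ∪ T ∩ M₂ = T := by
        rw [← Finset.inter_union_distrib_left, Finset.inter_eq_left.mpr hT]
      show (-1 : ℝ) ^ T.card * linkGame v T =
        (-1 : ℝ) ^ (T ∩ M₁ ∪ T ∩ M₂).card * linkGame v (T ∩ M₁ ∪ T ∩ M₂)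
      rw [hTT]
  rw [key, Finset.sum_product]
  have hsummand : ∀ A ∈ M₁.powerset, ∀ B ∈ M₂.powerset,
      (-1 : ℝ) ^ (A ∪ B).card * linkGame v (A ∪ B) =
      ((-1 : ℝ) ^ A.card * linkGame v A) * (-1 : ℝ) ^ B.card +
      (-1 : ℝ) ^ A.card * ((-1 : ℝ) ^ B.card * linkGame v B) := by
    intro A hA B hB
    rw [Finset.mem_powerset] at hA hB
    have hAB : Disjoint A B := hM.mono hA hB
    have hcov : Disjoint (covered A) (covered B) :=
      hdis.mono (covered_mono hA) (covered_mono hB)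
    rw [Finset.card_union_of_disjoint hAB, linkGame_union v hcov, pow_add]
    ring
  calc ∑ A ∈ M₁.powerset, ∑ B ∈ M₂.powerset,
        (-1 : ℝ) ^ (A ∪ B).card * linkGame v (A ∪ B)
      = ∑ A ∈ M₁.powerset, ∑ B ∈ M₂.powerset,
        (((-1 : ℝ) ^ A.card * linkGame v A) * (-1 : ℝ) ^ B.card +
         (-1 : ℝ) ^ A.card * ((-1 : ℝ) ^ B.card * linkGame v B)) := by
        refine Finset.sum_congr rfl fun A hA => Finset.sum_congr rfl fun B hB => ?_
        exact hsummand A hA B hB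
    _ = 0 := by
        simp only [Finset.sum_add_distrib, ← Finset.mul_sum, ← Finset.sum_mul]
        rw [neg_one_powerset_sum M₂ h2]
        simp only [mul_zero, Finset.sum_const_zero, zero_add]
        rw [neg_one_powerset_sum M₁ h1, zero_mul]

lemma compIn_eq_of_reachable {L : Finset (Sym2 V)} {S : Finset V} {x y : V}
    (h : (fromEdgeSet (↑(L.filter fun e => ∀ z ∈ e, z ∈ S) : Set (Sym2 V))).Reachable x y) :
    compIn L S x = compIn L S y := by
  unfold compIn
  ext j
  simp only [Finset.mem_filter, and_congr_right_iff]
  intro _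
  exact ⟨fun hr => h.symm.trans hr, fun hr => h.trans hr⟩

lemma filter_covered_eq {L : Finset (Sym2 V)} :
    (L.filter fun e => ∀ z ∈ e, z ∈ covered L) = L := by
  apply Finset.filter_true_of_mem
  intro e he z hz
  exact mem_covered.mpr ⟨e, he, hz⟩

lemma numCompsIn_covered {L : Finset (Sym2 V)} (hne : L.Nonempty) (hconn : EdgeConnected L) :
    numCompsIn L (covered L) = 1 := by
  obtain ⟨e, he⟩ := hne
  obtain ⟨x, y⟩ := e
  have hx : x ∈ covered L := mem_covered.mpr ⟨s(x, y), he, Sym2.mem_mk_left x y⟩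
  refine le_antisymm (Finset.card_le_one.mpr ?_) (Finset.card_pos.mpr ⟨_, Finset.mem_image_of_mem _ hx⟩)
  rintro C1 hC1 C2 hC2
  obtain ⟨u, hu, rfl⟩ := Finset.mem_image.mp hC1
  obtain ⟨w, hw, rfl⟩ := Finset.mem_image.mp hC2
  apply compIn_eq_of_reachable
  rw [filter_covered_eq]
  exact hconn u hu w hw

lemma walk_transfer {L : Finset (Sym2 V)} {a : V} :
    ∀ {x y : V}, ∀ p : (fromEdgeSet (↑L : Set (Sym2 V))).Walk x y, a ∉ p.support →
      (fromEdgeSet (↑(L.filter fun e => ∀ z ∈ e, z ∈ (covered L).erase a) :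
        Set (Sym2 V))).Reachable x y := by
  intro x y p
  induction p with
  | nil => intro _; exact Reachable.refl _
  | @cons u w y h p ih =>
    intro hsup
    rw [Walk.support_cons, List.mem_cons] at hsup
    push_neg at hsup
    obtain ⟨hau, hap⟩ := hsup
    have h' := h
    rw [fromEdgeSet_adj] at h'
    have hu : u ∈ covered L := mem_covered.mpr ⟨s(u, w), h'.1, Sym2.mem_mk_left u w⟩
    have hw : w ∈ covered L := mem_covered.mpr ⟨s(u, w), h'.1, Sym2.mem_mk_right u w⟩
    have hwa : w ≠ a := fun hh => hap (hh ▸ p.start_mem_support)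
    have adj2 : (fromEdgeSet (↑(L.filter fun e => ∀ z ∈ e, z ∈ (covered L).erase a) :
        Set (Sym2 V))).Adj u w := by
      rw [fromEdgeSet_adj]
      refine ⟨Finset.mem_coe.mpr (Finset.mem_filter.mpr ⟨h'.1, ?_⟩), h'.2⟩
      intro z hz
      rcases Sym2.mem_iff.mp hz with rfl | rfl
      · exact Finset.mem_erase.mpr ⟨Ne.symm hau, hu⟩
      · exact Finset.mem_erase.mpr ⟨hwa, hw⟩
    exact adj2.reachable.trans (ih hap)

lemma walk_avoid {L : Finset (Sym2 V)} {a : V}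
    (hdeg : (L.filter (fun e => a ∈ e)).card ≤ 1) :
    ∀ n {x y : V}, x ≠ a → y ≠ a →
      ∀ p : (fromEdgeSet (↑L : Set (Sym2 V))).Walk x y, p.length = n →
      (fromEdgeSet (↑(L.filter fun e => ∀ z ∈ e, z ∈ (covered L).erase a) :
        Set (Sym2 V))).Reachable x y := by
  intro n
  induction n using Nat.strong_induction_on with
  | _ n ih =>
    intro x y hx hy p hlen
    by_cases ha : a ∈ p.support
    · have hspec := p.take_spec ha
      set q1 := p.takeUntil a ha with hq1def
      set q2 := p.dropUntil a ha with hq2def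
      have hlensum : q1.length + q2.length = p.length := by
        rw [← hspec, Walk.length_append]
      cases hq : q1.reverse with
      | nil =>
        exact absurd (Walk.eq_of_length_eq_zero
          (by rw [← Walk.length_reverse, hq, Walk.length_nil])) hx
      | @cons _ u1 _ h1 r1 =>
        cases hq2 : q2 with
        | nil => exact absurd rfl hy
        | @cons _ u2 _ h2 r2 =>
          have h1' := h1
          have h2' := h2
          rw [fromEdgeSet_adj] at h1' h2'
          have m1 : s(a, u1) ∈ L.filter (fun e => a ∈ e) :=
            Finset.mem_filter.mpr ⟨Finset.mem_coe.mp h1'.1, Sym2.mem_mk_left a u1⟩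
          have m2 : s(a, u2) ∈ L.filter (fun e => a ∈ e) :=
            Finset.mem_filter.mpr ⟨Finset.mem_coe.mp h2'.1, Sym2.mem_mk_left a u2⟩
          obtain rfl : u1 = u2 := Sym2.congr_right.mp (Finset.card_le_one.mp hdeg _ m1 _ m2)
          have hlen1 : q1.length = r1.length + 1 := by
            rw [← Walk.length_reverse q1, hq, Walk.length_cons]
          have hlen2 : q2.length = r2.length + 1 := by
            rw [hq2, Walk.length_cons]
          refine ih (r1.reverse.append r2).length ?_ hx hy _ rfl
          rw [Walk.length_append, Walk.length_reverse]
          omega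
    · exact walk_transfer p ha

lemma not_cutvertex_of_degree_le_one {L : Finset (Sym2 V)} (hne : L.Nonempty)
    (hconn : EdgeConnected L) {a : V}
    (hdeg : (L.filter (fun e => a ∈ e)).card ≤ 1) : ¬ IsCutvertex L a := by
  rintro ⟨hacov, hlt⟩
  have h1 : numCompsIn L (covered L) = 1 := numCompsIn_covered hne hconn
  have h2 : numCompsIn L ((covered L).erase a) ≤ 1 := by
    apply Finset.card_le_one.mpr
    rintro C1 hC1 C2 hC2
    obtain ⟨u, hu, rfl⟩ := Finset.mem_image.mp hC1
    obtain ⟨w, hw, rfl⟩ := Finset.mem_image.mp hC2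
    apply compIn_eq_of_reachable
    obtain ⟨hua, hucov⟩ := Finset.mem_erase.mp hu
    obtain ⟨hwa, hwcov⟩ := Finset.mem_erase.mp hw
    obtain ⟨p⟩ := hconn u hucov w hwcov
    exact walk_avoid hdeg p.length hua hwa p rfl
  omega

lemma cutvertex_two_edges {L : Finset (Sym2 V)} (hne : L.Nonempty)
    (hconn : EdgeConnected L) {a : V} (hcut : IsCutvertex L a) :
    ∃ e1 ∈ L, ∃ e2 ∈ L, e1 ≠ e2 ∧ a ∈ e1 ∧ a ∈ e2 := by
  by_contra hcon
  push_neg at hcon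
  apply not_cutvertex_of_degree_le_one hne hconn ?_ hcut
  apply Finset.card_le_one.mpr
  intro e1 he1 e2 he2
  rw [Finset.mem_filter] at he1 he2
  by_contra hne'
  exact hcon e1 he1.1 e2 he2.1 hne' he1.2 he2.2

lemma exists_noncut_edge
    {E : Finset (Sym2 V)} (hE : SimpleEdges E)
    (hacyc : (fromEdgeSet (↑E : Set (Sym2 V))).IsAcyclic)
    {L : Finset (Sym2 V)} (hL : L ⊆ E) (hne : L.Nonempty) (hconn : EdgeConnected L)
    {d : Sym2 V} (hd : d ∈ cutedges L) {a b : V} (hdab : d = s(a, b)) :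
    ∃ e ∈ L, e ∉ cutedges L ∧ ∃ x ∈ e,
      (fromEdgeSet (↑(L.erase d) : Set (Sym2 V))).Reachable a x := by
  set G' := fromEdgeSet (↑(L.erase d) : Set (Sym2 V)) with hG'
  obtain ⟨hdL, hdcut⟩ := Finset.mem_filter.mp hd
  have hab : a ≠ b := by
    intro h
    exact hE d (hL hdL) (by rw [hdab, h]; exact Sym2.mk_isDiag_iff.mpr rfl)
  have hled : (↑(L.erase d) : Set (Sym2 V)) ⊆ ↑E := by
    intro e he
    exact hL (Finset.erase_subset d L (Finset.mem_coe.mp he))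
  have hle : G' ≤ fromEdgeSet (↑E : Set (Sym2 V)) := fromEdgeSet_mono hled
  have hacyc' : G'.IsAcyclic := fun v c hc => hacyc _ (hc.mapLe hle)
  -- b is not reachable from a in G'
  have hnotreach : ¬ G'.Reachable a b := by
    intro hr
    have hadj : (fromEdgeSet (↑E : Set (Sym2 V))).Adj a b :=
      (fromEdgeSet_adj _).mpr ⟨by rw [← hdab]; exact_mod_cast hL hdL, hab⟩
    have hbridge := (isAcyclic_iff_forall_adj_isBridge.mp hacyc) hadj
    rw [isBridge_iff] at hbridge
    apply hbridge
    refine hr.mono ?_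
    intro x y hxy
    rw [hG', fromEdgeSet_adj] at hxy
    obtain ⟨hmem, hxyne⟩ := hxy
    rw [Finset.mem_coe, Finset.mem_erase] at hmem
    rw [deleteEdges, sdiff_adj]
    constructor
    · exact (fromEdgeSet_adj _).mpr ⟨by exact_mod_cast hL hmem.2, hxyne⟩
    · rw [fromEdgeSet_adj]
      rintro ⟨hm, -⟩
      rw [Set.mem_singleton_iff, ← hdab] at hm
      exact hmem.1 hm
  -- the set of relevant vertices
  set R : Finset V := Finset.univ.filter
    (fun u => G'.Reachable a u ∧ ∃ e ∈ L.erase d, u ∈ e) with hR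
  have hmemR : ∀ u : V, u ∈ R ↔ G'.Reachable a u ∧ ∃ e ∈ L.erase d, u ∈ e := by
    intro u; simp [hR]
  -- a has another edge besides d
  have hacut : IsCutvertex L a := hdcut a (by rw [hdab]; exact Sym2.mem_mk_left a b)
  obtain ⟨e1, he1, e2, he2, hne12, hae1, hae2⟩ := cutvertex_two_edges hne hconn hacut
  have he0 : ∃ e0 ∈ L.erase d, a ∈ e0 := by
    by_cases h1 : e1 = d
    · exact ⟨e2, Finset.mem_erase.mpr ⟨by rw [← h1]; exact hne12.symm, he2⟩, hae2⟩
    · exact ⟨e1, Finset.mem_erase.mpr ⟨h1, he1⟩, hae1⟩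
  obtain ⟨e0, he0d, hae0⟩ := he0
  obtain ⟨w0, rfl⟩ := Sym2.mem_iff_exists.mp hae0
  have hw0a : w0 ≠ a := by
    intro h
    exact hE _ (hL (Finset.mem_of_mem_erase he0d)) (Sym2.mk_isDiag_iff.mpr h.symm)
  have hadj0 : G'.Adj a w0 :=
    (fromEdgeSet_adj _).mpr ⟨Finset.mem_coe.mpr he0d, hw0a.symm⟩
  have hw0R : w0 ∈ R := (hmemR w0).mpr ⟨hadj0.reachable, ⟨_, he0d, Sym2.mem_mk_right a w0⟩⟩
  have haR : a ∈ R := (hmemR a).mpr ⟨Reachable.refl a, ⟨_, he0d, Sym2.mem_mk_left a w0⟩⟩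
  obtain ⟨u, huR, hmax⟩ := R.exists_max_image (fun u => G'.dist a u) ⟨a, haR⟩
  obtain ⟨hreach_u, eu, heu, hueu⟩ := (hmemR u).mp huR
  -- basic facts about u
  have hdist1 : 1 ≤ G'.dist a u := by
    refine le_trans ?_ (hmax w0 hw0R)
    rcases Nat.eq_zero_or_pos (G'.dist a w0) with h0 | h1
    · rcases (dist_eq_zero_iff_eq_or_not_reachable).mp h0 with h | h
      · exact absurd h.symm hw0a
      · exact absurd hadj0.reachable h
    · exact h1
  have hua : u ≠ a := by
    rintro rfl
    rw [SimpleGraph.dist_self] at hdist1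
    omega
  have hub : u ≠ b := fun h => hnotreach (h ▸ hreach_u)
  have hund : u ∉ d := by
    rw [hdab, Sym2.mem_iff]
    rintro (rfl | rfl)
    · exact hua rfl
    · exact hub rfl
  -- u has degree at most 1 in L
  have hdegu : (L.filter (fun e => u ∈ e)).card ≤ 1 := by
    by_contra hcon
    push_neg at hcon
    obtain ⟨f1, hf1, f2, hf2, hf12⟩ := Finset.one_lt_card.mp hcon
    rw [Finset.mem_filter] at hf1 hf2
    have hf1d : f1 ≠ d := fun h => hund (h ▸ hf1.2)
    have hf2d : f2 ≠ d := fun h => hund (h ▸ hf2.2)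
    obtain ⟨w1, rfl⟩ := Sym2.mem_iff_exists.mp hf1.2
    obtain ⟨w2, rfl⟩ := Sym2.mem_iff_exists.mp hf2.2
    have hw1u : w1 ≠ u := fun h => hE _ (hL hf1.1) (Sym2.mk_isDiag_iff.mpr h.symm)
    have hw2u : w2 ≠ u := fun h => hE _ (hL hf2.1) (Sym2.mk_isDiag_iff.mpr h.symm)
    have hw12 : w1 ≠ w2 := fun h => hf12 (by rw [h])
    have hadj1 : G'.Adj u w1 :=
      (fromEdgeSet_adj _).mpr ⟨Finset.mem_coe.mpr (Finset.mem_erase.mpr ⟨hf1d, hf1.1⟩), hw1u.symm⟩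
    have hadj2 : G'.Adj u w2 :=
      (fromEdgeSet_adj _).mpr ⟨Finset.mem_coe.mpr (Finset.mem_erase.mpr ⟨hf2d, hf2.1⟩), hw2u.symm⟩
    have hw1R : w1 ∈ R := (hmemR w1).mpr ⟨hreach_u.trans hadj1.reachable,
      ⟨_, Finset.mem_erase.mpr ⟨hf1d, hf1.1⟩, Sym2.mem_mk_right u w1⟩⟩
    have hw2R : w2 ∈ R := (hmemR w2).mpr ⟨hreach_u.trans hadj2.reachable,
      ⟨_, Finset.mem_erase.mpr ⟨hf2d, hf2.1⟩, Sym2.mem_mk_right u w2⟩⟩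
    obtain ⟨p, hp, hplen⟩ := hreach_u.exists_path_of_dist
    -- every R-neighbor of u lies on p
    have hsupp : ∀ w, G'.Adj u w → w ∈ R → w ∈ p.support := by
      intro w hadj hwR
      by_contra hns
      have hq : (p.concat hadj).IsPath := by
        rw [← Walk.isPath_reverse_iff, Walk.reverse_concat]
        refine Walk.IsPath.cons ((Walk.isPath_reverse_iff p).mpr hp) ?_
        rw [Walk.support_reverse, List.mem_reverse]
        exact hns
      obtain ⟨p', hp', hp'len⟩ := (hreach_u.trans hadj.reachable).exists_path_of_dist
      have := hacyc'.path_unique ⟨p', hp'⟩ ⟨p.concat hadj, hq⟩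
      have hlen : p'.length = (p.concat hadj).length := by
        rw [Subtype.mk_eq_mk] at this
        rw [this]
      rw [Walk.length_concat, hplen] at hlen
      have := hmax w hwR
      omega
    have hw1p : w1 ∈ p.support := hsupp w1 hadj1 hw1R
    have hw2p : w2 ∈ p.support := hsupp w2 hadj2 hw2R
    -- u is not in the support of takeUntil
    have hu_not : ∀ (w : V) (hw : w ∈ p.support), w ≠ u → u ∉ (p.takeUntil w hw).support := by
      intro w hw hwu hin
      have hspec := p.take_spec hw
      have hnodup : p.support.Nodup := hp.support_nodup
      rw [← hspec, Walk.support_append] at hnodup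
      have hdisj := List.disjoint_of_nodup_append hnodup
      have humem : u ∈ (p.dropUntil w hw).support := Walk.end_mem_support _
      rw [Walk.support_eq_cons, List.mem_cons] at humem
      rcases humem with h | h
      · exact hwu h.symm
      · exact hdisj hin h
    -- the two extended paths
    have hq1 : ((p.takeUntil w1 hw1p).concat hadj1.symm).IsPath := by
      rw [← Walk.isPath_reverse_iff, Walk.reverse_concat]
      refine Walk.IsPath.cons ((Walk.isPath_reverse_iff _).mpr (hp.takeUntil hw1p)) ?_
      rw [Walk.support_reverse, List.mem_reverse]
      exact hu_not w1 hw1p hw1u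
    have hq2 : ((p.takeUntil w2 hw2p).concat hadj2.symm).IsPath := by
      rw [← Walk.isPath_reverse_iff, Walk.reverse_concat]
      refine Walk.IsPath.cons ((Walk.isPath_reverse_iff _).mpr (hp.takeUntil hw2p)) ?_
      rw [Walk.support_reverse, List.mem_reverse]
      exact hu_not w2 hw2p hw2u
    have he1' := hacyc'.path_unique ⟨(p.takeUntil w1 hw1p).concat hadj1.symm, hq1⟩ ⟨p, hp⟩
    have he2' := hacyc'.path_unique ⟨(p.takeUntil w2 hw2p).concat hadj2.symm, hq2⟩ ⟨p, hp⟩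
    rw [Subtype.mk_eq_mk] at he1' he2'
    have hw1' : w1 = p.reverse.getVert 1 := by
      rw [← he1', Walk.reverse_concat]
      simp only [Walk.getVert_cons_succ, Walk.getVert_zero]
    have hw2' : w2 = p.reverse.getVert 1 := by
      rw [← he2', Walk.reverse_concat]
      simp only [Walk.getVert_cons_succ, Walk.getVert_zero]
    exact hw12 (hw1'.trans hw2'.symm)
  have hnotcut : ¬ IsCutvertex L u := not_cutvertex_of_degree_le_one hne hconn hdegu
  refine ⟨eu, Finset.mem_of_mem_erase heu, ?_, u, hueu, hreach_u⟩
  intro hcut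
  exact hnotcut ((Finset.mem_filter.mp hcut).2 u hueu)

lemma not_reachable_erase {E : Finset (Sym2 V)}
    (hacyc : (fromEdgeSet (↑E : Set (Sym2 V))).IsAcyclic)
    {L : Finset (Sym2 V)} (hL : L ⊆ E) {a b : V} (hab : a ≠ b) (hd : s(a, b) ∈ L) :
    ¬ (fromEdgeSet (↑(L.erase s(a, b)) : Set (Sym2 V))).Reachable a b := by
  intro hr
  have hadj : (fromEdgeSet (↑E : Set (Sym2 V))).Adj a b :=
    (fromEdgeSet_adj _).mpr ⟨by exact_mod_cast hL hd, hab⟩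
  have hbridge := (isAcyclic_iff_forall_adj_isBridge.mp hacyc) hadj
  rw [isBridge_iff] at hbridge
  apply hbridge
  refine hr.mono ?_
  intro x y hxy
  rw [fromEdgeSet_adj] at hxy
  obtain ⟨hmem, hxyne⟩ := hxy
  rw [Finset.mem_coe, Finset.mem_erase] at hmem
  rw [deleteEdges, sdiff_adj]
  constructor
  · exact (fromEdgeSet_adj _).mpr ⟨by exact_mod_cast hL hmem.2, hxyne⟩
  · rw [fromEdgeSet_adj]
    rintro ⟨hm, -⟩
    rw [Set.mem_singleton_iff] at hm
    exact hmem.1 hm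

lemma exists_split {E : Finset (Sym2 V)} (hE : SimpleEdges E)
    (hacyc : (fromEdgeSet (↑E : Set (Sym2 V))).IsAcyclic)
    {L : Finset (Sym2 V)} (hL : L ⊆ E) (hne : L.Nonempty) (hconn : EdgeConnected L)
    {K : Finset (Sym2 V)} (hK : K ⊆ cutedges L) (hKne : K.Nonempty) :
    ∃ M₁ M₂ : Finset (Sym2 V), M₁ ∪ M₂ = L \ K ∧ M₁.Nonempty ∧ M₂.Nonempty ∧
      Disjoint (covered M₁) (covered M₂) := by
  obtain ⟨d, hdK⟩ := hKne
  have hdcut : d ∈ cutedges L := hK hdK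
  have hdL : d ∈ L := Finset.mem_of_mem_filter d hdcut
  obtain ⟨a, b⟩ := d
  have hab : a ≠ b := fun h => hE _ (hL hdL) (Sym2.mk_isDiag_iff.mpr h)
  set G' := fromEdgeSet (↑(L.erase s(a, b)) : Set (Sym2 V)) with hG'
  have hnr : ¬ G'.Reachable a b := not_reachable_erase hacyc hL hab hdL
  -- propagation of reachability along an edge
  have hprop : ∀ e ∈ L.erase s(a, b), ∀ x ∈ e, G'.Reachable a x → ∀ y ∈ e, G'.Reachable a y := by
    intro e he x hx hrx y hy
    obtain ⟨z, rfl⟩ := Sym2.mem_iff_exists.mp hx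
    have hxz : x ≠ z := fun h =>
      hE _ (hL (Finset.mem_of_mem_erase he)) (Sym2.mk_isDiag_iff.mpr h)
    rcases Sym2.mem_iff.mp hy with rfl | rfl
    · exact hrx
    · exact hrx.trans ((fromEdgeSet_adj _).mpr ⟨Finset.mem_coe.mpr he, hxz⟩).reachable
  refine ⟨(L \ K).filter (fun e => ∃ x ∈ e, G'.Reachable a x),
    (L \ K).filter (fun e => ¬ ∃ x ∈ e, G'.Reachable a x),
    Finset.filter_union_filter_not_eq _ _, ?_, ?_, ?_⟩
  · -- M₁ nonempty
    obtain ⟨e, he, hecut, x, hxe, hrx⟩ := exists_noncut_edge hE hacyc hL hne hconn hdcut rfl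
    refine ⟨e, Finset.mem_filter.mpr ⟨Finset.mem_sdiff.mpr ⟨he, fun h => hecut (hK h)⟩,
      ⟨x, hxe, hrx⟩⟩⟩
  · -- M₂ nonempty
    obtain ⟨e, he, hecut, x, hxe, hrx⟩ :=
      exists_noncut_edge hE hacyc hL hne hconn hdcut (Sym2.eq_swap)
    refine ⟨e, Finset.mem_filter.mpr ⟨Finset.mem_sdiff.mpr ⟨he, fun h => hecut (hK h)⟩, ?_⟩⟩
    rintro ⟨y, hye, hry⟩
    -- then x would be reachable from both a and b
    have heL : e ∈ L.erase s(a, b) := by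
      refine Finset.mem_erase.mpr ⟨?_, he⟩
      intro h
      exact hecut (h ▸ hdcut)
    have hrx' : G'.Reachable a x := hprop e heL y hye hry x hxe
    exact hnr (hrx'.trans hrx.symm)
  · -- disjoint covered
    rw [Finset.disjoint_left]
    intro x hx1 hx2
    obtain ⟨e1, he1, hxe1⟩ := mem_covered.mp hx1
    obtain ⟨e2, he2, hxe2⟩ := mem_covered.mp hx2
    rw [Finset.mem_filter] at he1 he2
    obtain ⟨y, hye1, hry⟩ := he1.2
    have he1L : e1 ∈ L.erase s(a, b) := by
      refine Finset.mem_erase.mpr ⟨?_, (Finset.mem_sdiff.mp he1.1).1⟩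
      intro h
      exact (Finset.mem_sdiff.mp he1.1).2 (h ▸ hdK)
    have hrx : G'.Reachable a x := hprop e1 he1L y hye1 hry x hxe1
    exact he2.2 ⟨x, hxe2, hrx⟩

omit [Fintype V] [DecidableEq V] in
lemma neg_pow_sub_real (m n : ℕ) (h : n ≤ m) : (-1 : ℝ) ^ (m - n) = (-1) ^ m * (-1) ^ n := by
  conv_rhs => rw [show m = (m - n) + n from (Nat.sub_add_cancel h).symm]
  rw [pow_add, mul_assoc, ← pow_add, ← two_mul, pow_mul]
  norm_num

lemma neg_one_powerset_sum' {α : Type*} [DecidableEq α] (s : Finset α) :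
    ∑ A ∈ s.powerset, (-1 : ℝ) ^ A.card = if s = ∅ then 1 else 0 := by
  by_cases hs : s = ∅
  · subst hs; simp
  · rw [if_neg hs]
    exact_mod_cast Finset.sum_powerset_neg_one_pow_card_of_nonempty
      (Finset.nonempty_iff_ne_empty.mpr hs)

lemma ind_sum {α : Type*} [DecidableEq α] (s : Finset α) (c : ℝ) :
    ∑ K ∈ s.powerset, (if K.Nonempty then (-1 : ℝ) ^ (K.card + 1) * c else 0) =
      if s.Nonempty then c else 0 := by
  have h1 : ∀ K : Finset α, (if K.Nonempty then (-1 : ℝ) ^ (K.card + 1) * c else 0)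
      = (-1 : ℝ) ^ (K.card + 1) * c - (if K = ∅ then (-1 : ℝ) ^ (K.card + 1) * c else 0) := by
    intro K
    by_cases hK : K = ∅
    · subst hK; simp
    · rw [if_pos (Finset.nonempty_iff_ne_empty.mpr hK), if_neg hK, sub_zero]
  rw [Finset.sum_congr rfl (fun K _ => h1 K), Finset.sum_sub_distrib,
    Finset.sum_ite_eq' s.powerset (∅ : Finset α) (fun K => (-1 : ℝ) ^ (K.card + 1) * c),
    if_pos (Finset.empty_mem_powerset s)]
  have h2 : ∑ K ∈ s.powerset, (-1 : ℝ) ^ (K.card + 1) * c =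
      (∑ K ∈ s.powerset, (-1 : ℝ) ^ K.card) * (-c) := by
    rw [Finset.sum_mul]
    refine Finset.sum_congr rfl fun K _ => ?_
    ring
  rw [h2, neg_one_powerset_sum']
  by_cases hs : s = ∅
  · simp [hs]
  · rw [if_neg hs, if_pos (Finset.nonempty_iff_ne_empty.mpr hs)]
    simp

/-- in a cycle-free graph, the Harsanyi dividend of a nonempty connected
edge set `L` equals the alternating sum over the subsets `T` with `D(L) ⊆ T ⊆ L`. -/
theorem dividend_cutedges_sum (v : Finset V → ℝ) (f : ℕ → ℝ)
    (hsym : SymmetricGame v f) (hzn : ZeroNormalized v)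
    (E : Finset (Sym2 V)) (hE : SimpleEdges E)
    (hacyc : (SimpleGraph.fromEdgeSet (↑E : Set (Sym2 V))).IsAcyclic)
    (L : Finset (Sym2 V)) (hL : L ⊆ E) (hne : L.Nonempty) (hconn : EdgeConnected L) :
    dividend (linkGame v) L =
      ∑ T ∈ L.powerset.filter (fun T => cutedges L ⊆ T),
        (-1 : ℝ) ^ (L.card - T.card) * linkGame v T := by

  classical
  have hDL : cutedges L ⊆ L := Finset.filter_subset _ _
  -- the vanishing of the complementary sum
  have key : ∀ K ⊆ cutedges L, K.Nonempty →
      ∑ T ∈ (L \ K).powerset, (-1 : ℝ) ^ T.card * linkGame v T = 0 := by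
    intro K hK hKne
    obtain ⟨M₁, M₂, hunion, h1, h2, hdis⟩ := exists_split hE hacyc hL hne hconn hK hKne
    rw [← hunion]
    exact alt_sum_zero v h1 h2 hdis
  have hzero : ∑ T ∈ L.powerset.filter (fun T => ¬ cutedges L ⊆ T),
      (-1 : ℝ) ^ (L.card - T.card) * linkGame v T = 0 := by
    rw [Finset.sum_filter]
    have inner : ∀ T ∈ L.powerset,
        (if ¬ cutedges L ⊆ T then (-1 : ℝ) ^ (L.card - T.card) * linkGame v T else 0) =
        ∑ K ∈ (cutedges L).powerset,
          (if K.Nonempty ∧ Disjoint K T then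
            (-1 : ℝ) ^ (K.card + 1) * ((-1 : ℝ) ^ (L.card - T.card) * linkGame v T) else 0) := by
      intro T hT
      rw [← Finset.sum_subset (Finset.powerset_mono.mpr (Finset.sdiff_subset (t := T)))
        (by
          intro K hKD hKnot
          rw [Finset.mem_powerset] at hKD hKnot
          refine if_neg ?_
          rintro ⟨hKne', hdis⟩
          exact hKnot (Finset.subset_sdiff.mpr ⟨hKD, hdis⟩))]
      have congr1 : ∀ K ∈ (cutedges L \ T).powerset,
          (if K.Nonempty ∧ Disjoint K T then
            (-1 : ℝ) ^ (K.card + 1) * ((-1 : ℝ) ^ (L.card - T.card) * linkGame v T) else 0) =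
          (if K.Nonempty then
            (-1 : ℝ) ^ (K.card + 1) * ((-1 : ℝ) ^ (L.card - T.card) * linkGame v T) else 0) := by
        intro K hK
        rw [Finset.mem_powerset] at hK
        have hdis : Disjoint K T := (Finset.subset_sdiff.mp hK).2
        by_cases hKne' : K.Nonempty
        · rw [if_pos ⟨hKne', hdis⟩, if_pos hKne']
        · rw [if_neg (fun hc => hKne' hc.1), if_neg hKne']
      rw [Finset.sum_congr rfl congr1, ind_sum]
      by_cases hsub : cutedges L ⊆ T
      · rw [if_neg (by simpa using hsub), if_neg
          (by rw [Finset.sdiff_nonempty]; simpa using hsub)]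
      · rw [if_pos hsub, if_pos (Finset.sdiff_nonempty.mpr hsub)]
    rw [Finset.sum_congr rfl inner, Finset.sum_comm]
    refine Finset.sum_eq_zero ?_
    intro K hK
    rw [Finset.mem_powerset] at hK
    by_cases hKne : K.Nonempty
    · have congr2 : ∀ T ∈ L.powerset,
          (if K.Nonempty ∧ Disjoint K T then
            (-1 : ℝ) ^ (K.card + 1) * ((-1 : ℝ) ^ (L.card - T.card) * linkGame v T) else 0) =
          (if Disjoint K T then
            (-1 : ℝ) ^ (K.card + 1) * ((-1 : ℝ) ^ (L.card - T.card) * linkGame v T) else 0) := by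
        intro T hT
        by_cases hdis : Disjoint K T
        · rw [if_pos ⟨hKne, hdis⟩, if_pos hdis]
        · rw [if_neg (fun hc => hdis hc.2), if_neg hdis]
      rw [Finset.sum_congr rfl congr2, ← Finset.sum_filter]
      have hset : L.powerset.filter (fun T => Disjoint K T) = (L \ K).powerset := by
        ext T
        rw [Finset.mem_filter, Finset.mem_powerset, Finset.mem_powerset, Finset.subset_sdiff]
        exact and_congr_right fun _ => disjoint_comm
      rw [hset]
      have hsign : ∀ T ∈ (L \ K).powerset,
          (-1 : ℝ) ^ (K.card + 1) * ((-1 : ℝ) ^ (L.card - T.card) * linkGame v T) =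
          ((-1 : ℝ) ^ (K.card + 1) * (-1 : ℝ) ^ L.card) *
            ((-1 : ℝ) ^ T.card * linkGame v T) := by
        intro T hT
        rw [Finset.mem_powerset] at hT
        have hTL : T ⊆ L := hT.trans (Finset.sdiff_subset)
        rw [neg_pow_sub_real L.card T.card (Finset.card_le_card hTL)]
        ring
      rw [Finset.sum_congr rfl hsign, ← Finset.mul_sum, key K hK hKne, mul_zero]
    · refine Finset.sum_eq_zero fun T _ => if_neg (fun hc => hKne hc.1)
  unfold dividend
  rw [← Finset.sum_filter_add_sum_filter_not L.powerset (fun T => cutedges L ⊆ T)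
    (fun T => (-1 : ℝ) ^ (L.card - T.card) * linkGame v T), hzero, add_zero]

end
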